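/- arXiv:2402.14752 — 2 statements merged into one kernel-verified Lean document; each statement's English description precedes it below -/
import Mathlib

section
/- Let G be a finite simple graph on a nonempty vertex set V that is vertex-transitive, and let J ∈ ℝ^V be any real vector. Then the infimum, over all H-feasible pairs (v, M) for G, of Σ_α J_α v_α, is less than or equal to −(Σ_α |J_α|) · |V|^{−1/2} · √(ϑ(G)). -/
open scoped BigOperators

/-- A theta-feasible matrix for `G`: real symmetric PSD with trace 1 and vanishing on edges. -/
def ThetaFeasible {V : Type*} [Fintype V] (G : SimpleGraph V) (M : Matrix V V ℝ) : Prop :=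
  M.IsSymm ∧ M.PosSemidef ∧ M.trace = 1 ∧ ∀ a b, G.Adj a b → M a b = 0

/-- The Lovász theta function of `G`. -/
noncomputable def lovaszTheta {V : Type*} [Fintype V] (G : SimpleGraph V) : ℝ :=
  sSup {x : ℝ | ∃ M : Matrix V V ℝ, ThetaFeasible G M ∧ x = ∑ a, ∑ b, M a b}

/-- An H²-feasible matrix for `G`: real symmetric PSD, unit diagonal, vanishing on edges. -/
def H2Feasible {V : Type*} [Fintype V] (G : SimpleGraph V) (M : Matrix V V ℝ) : Prop :=
  M.IsSymm ∧ M.PosSemidef ∧ (∀ a, M a a = 1) ∧ ∀ a b, G.Adj a b → M a b = 0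

/-- The block matrix N = [[1, vᵀ],[v, M]]. -/
def blockN {V : Type*} [Fintype V] [DecidableEq V] (v : V → ℝ) (M : Matrix V V ℝ) :
    Matrix (Unit ⊕ V) (Unit ⊕ V) ℝ :=
  Matrix.fromBlocks 1 (Matrix.of fun _ b => v b) (Matrix.of fun a _ => v a) M

/-- An H-feasible pair for `G`. -/
def HFeasible {V : Type*} [Fintype V] [DecidableEq V] (G : SimpleGraph V)
    (v : V → ℝ) (M : Matrix V V ℝ) : Prop :=
  H2Feasible G M ∧ (blockN v M).PosSemidef

/-- `G` is vertex-transitive. -/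
def VertexTransitive {V : Type*} (G : SimpleGraph V) : Prop :=
  ∀ u w : V, ∃ g : G ≃g G, g u = w

/-!
Average a theta-feasible matrix `M'` over `Aut G`. By vertex-transitivity the average, rescaled
by `n = |V|`, is H²-feasible and all its row sums equal `x = Σ M'`; so `𝟙` is an eigenvector and
`M ⪰ (x / n) 𝟙𝟙ᵀ`. Conjugating `M` by the sign pattern `s` of `J` and taking `v = -√(x / n) s`
gives an H-feasible pair (its Schur complement is `D (M - (x / n) 𝟙𝟙ᵀ) D`) with objective
`-√(x / n) Σ |J α|`. Taking the supremum over `x` gives the bound.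
-/

open Matrix

lemma Real.mul_sqrt_sSup_le {T : Set ℝ} {κ B : ℝ} (hκ : 0 ≤ κ) (hB : 0 ≤ B)
    (h : ∀ x ∈ T, κ * √x ≤ B) : κ * √(sSup T) ≤ B := by
  rcases hκ.eq_or_lt with rfl | hκ
  · simpa using hB
  rw [← le_div_iff₀' hκ, Real.sqrt_le_left (by positivity)]
  refine Real.sSup_le (fun x hx => ?_) (by positivity)
  rw [← Real.sqrt_le_left (by positivity), le_div_iff₀' hκ]
  exact h x hx

namespace Matrix

variable {n : Type*} [Fintype n]

omit [Fintype n] in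
lemma PosSemidef.isSymm {M : Matrix n n ℝ} (hM : M.PosSemidef) : M.IsSymm :=
  isHermitian_iff_isSymm.1 hM.isHermitian

lemma PosSemidef.sum_sum_nonneg {M : Matrix n n ℝ} (hM : M.PosSemidef) :
    0 ≤ ∑ a, ∑ b, M a b := by
  simpa [dotProduct, mulVec] using hM.dotProduct_mulVec_nonneg 1

/-- `M - x P = (1 - P) M (1 - P)` for the projection `P = 𝟙𝟙ᵀ / n` onto the eigenvector `𝟙`. -/
lemma PosSemidef.sub_smul_of_forall_sum_eq [DecidableEq n] [Nonempty n] {M : Matrix n n ℝ}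
    (hM : M.PosSemidef) {x : ℝ} (hrow : ∀ a, ∑ b, M a b = x) :
    (M - (x / Fintype.card n) • of fun _ _ => (1 : ℝ)).PosSemidef := by
  set E : Matrix n n ℝ := of fun _ _ => 1
  set c : ℝ := (Fintype.card n : ℝ)⁻¹
  have hc : c * Fintype.card n = 1 := inv_mul_cancel₀ (by positivity)
  have hME : M * E = x • E := by ext a b; simp [E, mul_apply, hrow]
  have hEM : E * M = x • E := by
    ext a b; simp [E, mul_apply, ← hrow b, hM.isSymm.apply b]
  have hEE : E * E = (Fintype.card n : ℝ) • E := by ext; simp [E, mul_apply]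
  have hE : (1 - c • E)ᴴ = 1 - c • E := by ext a b; simp [E, one_apply, eq_comm (a := a)]
  have key : M - (x / Fintype.card n) • E = (1 - c • E)ᴴ * M * (1 - c • E) := by
    rw [hE]
    simp only [Matrix.sub_mul, Matrix.mul_sub, Matrix.one_mul, Matrix.mul_one, Matrix.smul_mul,
      Matrix.mul_smul, hME, hEM, hEE, smul_smul]
    rw [mul_right_comm, hc, one_mul, sub_self, smul_zero, sub_zero, div_eq_inv_mul]
  rw [key]
  exact hM.conjTranspose_mul_mul_same _

end Matrix

section Feasibility

variable {V : Type*} [Fintype V] [DecidableEq V] {G : SimpleGraph V}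

lemma blockN_posSemidef_iff (v : V → ℝ) (M : Matrix V V ℝ) :
    (blockN v M).PosSemidef ↔ (M - vecMulVec v v).PosSemidef := by
  have hN : blockN v M = fromBlocks 1 (of fun _ b => v b) (of fun _ b => v b)ᴴ M := by
    congr 1
  have : Invertible (1 : Matrix Unit Unit ℝ) := invertibleOne
  rw [hN, PosDef.fromBlocks₁₁ _ _ PosDef.one, inv_one, Matrix.mul_one]
  congr! 2
  ext a b
  simp [vecMulVec, mul_apply]

lemma H2Feasible.diagonal_mul_mul_diagonal {M : Matrix V V ℝ} (hM : H2Feasible G M)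
    {s : V → ℝ} (hs : ∀ a, s a * s a = 1) :
    H2Feasible G (diagonal s * M * diagonal s) := by
  obtain ⟨-, hpsd, hdiag, hedge⟩ := hM
  have hpsd' : (diagonal s * M * diagonal s).PosSemidef := by
    simpa using hpsd.conjTranspose_mul_mul_same (diagonal s)
  refine ⟨hpsd'.isSymm, hpsd', fun a => ?_, fun a b hab => ?_⟩
  · simp [diagonal_mul, mul_diagonal, hdiag, hs]
  · simp [diagonal_mul, mul_diagonal, hedge a b hab]

lemma h2Feasible_one : H2Feasible G 1 :=
  ⟨isSymm_one, PosSemidef.one, fun _ => one_apply_eq _,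
    fun _ _ hab => one_apply_ne (G.ne_of_adj hab)⟩

lemma hFeasible_zero_one : HFeasible G 0 1 :=
  ⟨h2Feasible_one, by simpa [blockN_posSemidef_iff] using PosSemidef.one⟩

lemma HFeasible.abs_le_one {v : V → ℝ} {M : Matrix V V ℝ} (h : HFeasible G v M)
    (a : V) : |v a| ≤ 1 := by
  have := ((blockN_posSemidef_iff v M).1 h.2).diag_nonneg (i := a)
  rw [Matrix.sub_apply, h.1.2.2.1 a, vecMulVec_apply] at this
  rw [← sq_le_one_iff_abs_le_one]
  linarith

lemma HFeasible.neg_sum_abs_le {v : V → ℝ} {M : Matrix V V ℝ}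
    (h : HFeasible G v M) (J : V → ℝ) : -∑ a, |J a| ≤ ∑ a, J a * v a := by
  rw [← Finset.sum_neg_distrib]
  refine Finset.sum_le_sum fun a _ => (neg_abs_le _).trans' ?_
  rw [neg_le_neg_iff, abs_mul]
  exact mul_le_of_le_one_right (abs_nonneg _) (h.abs_le_one a)

end Feasibility

section Construction

variable {V : Type*} [Fintype V] [DecidableEq V] [Nonempty V] {G : SimpleGraph V}

lemma H2Feasible.exists_hFeasible {M : Matrix V V ℝ} (hM : H2Feasible G M) {x : ℝ}
    (hrow : ∀ a, ∑ b, M a b = x) (J : V → ℝ) :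
    ∃ v N, HFeasible G v N ∧
      ∑ a, J a * v a = -((∑ a, |J a|) * (√(Fintype.card V))⁻¹ * √x) := by
  set n : ℝ := (Fintype.card V : ℝ)
  have hn : 0 < n := by positivity
  have hx : 0 ≤ x := by
    have := hM.2.1.sum_sum_nonneg
    simp only [hrow, Finset.sum_const, Finset.card_univ, nsmul_eq_mul] at this
    exact nonneg_of_mul_nonneg_right this hn
  set t : ℝ := (√n)⁻¹ * √x
  have ht : t * t = x / n := by
    rw [mul_mul_mul_comm, ← mul_inv, Real.mul_self_sqrt hn.le, Real.mul_self_sqrt hx,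
      inv_mul_eq_div]
  set s : V → ℝ := fun a => if 0 ≤ J a then 1 else -1
  have hs : ∀ a, s a * s a = 1 := fun a => by by_cases h : 0 ≤ J a <;> simp [s, h]
  have hJs : ∀ a, J a * s a = |J a| := fun a => by
    by_cases h : 0 ≤ J a
    · simp [s, h, abs_of_nonneg h]
    · simp [s, h, abs_of_neg (not_le.1 h)]
  refine ⟨-(t • s), diagonal s * M * diagonal s,
    ⟨hM.diagonal_mul_mul_diagonal hs, ?_⟩, ?_⟩
  · have hschur : diagonal s * M * diagonal s - vecMulVec (-(t • s)) (-(t • s))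
        = (diagonal s)ᴴ * (M - (x / n) • of fun _ _ => (1 : ℝ)) * diagonal s := by
      ext a b
      simp [vecMulVec, diagonal_mul, mul_diagonal, ← ht]
      ring
    rw [blockN_posSemidef_iff, hschur]
    exact (hM.2.1.sub_smul_of_forall_sum_eq hrow).conjTranspose_mul_mul_same _
  · simp only [Pi.neg_apply, Pi.smul_apply, smul_eq_mul, mul_neg, mul_left_comm (J _), hJs,
      Finset.sum_neg_distrib, ← Finset.mul_sum]
    ring

end Construction

instance SimpleGraph.Iso.finite {V W : Type*} [Finite V] {G : SimpleGraph V}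
    {H : SimpleGraph W} : Finite (G ≃g H) :=
  Finite.of_injective _ RelIso.toEquiv_injective

section Averaging

variable {V : Type*} {G : SimpleGraph V} [Fintype (G ≃g G)]

variable (G) in
def autSum (M : Matrix V V ℝ) : Matrix V V ℝ := ∑ g : G ≃g G, M.submatrix g g

lemma autSum_apply (M : Matrix V V ℝ) (a b : V) :
    autSum G M a b = ∑ g : G ≃g G, M (g a) (g b) := by
  simp [autSum, Matrix.sum_apply]

lemma autSum_apply_map (M : Matrix V V ℝ) (h : G ≃g G) (a b : V) :
    autSum G M (h a) (h b) = autSum G M a b := by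
  simp only [autSum_apply, ← RelIso.mul_apply]
  exact Fintype.sum_equiv (Equiv.mulRight h) _ _ fun _ => rfl

variable [Fintype V]

lemma trace_autSum (M : Matrix V V ℝ) :
    (autSum G M).trace = Fintype.card (G ≃g G) * M.trace := by
  calc (autSum G M).trace = ∑ g : G ≃g G, ∑ a, M (g a) (g a) := by
        simp only [trace, diag, autSum_apply]
        exact Finset.sum_comm
    _ = ∑ _g : G ≃g G, M.trace :=
        Finset.sum_congr rfl fun g _ => Fintype.sum_equiv g.toEquiv _ _ fun _ => rfl
    _ = Fintype.card (G ≃g G) * M.trace := by simp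

lemma sum_sum_autSum (M : Matrix V V ℝ) :
    ∑ a, ∑ b, autSum G M a b = Fintype.card (G ≃g G) * ∑ a, ∑ b, M a b := by
  calc ∑ a, ∑ b, autSum G M a b = ∑ g : G ≃g G, ∑ a, ∑ b, M (g a) (g b) := by
        have hswap (a : V) :
            ∑ b, ∑ g : G ≃g G, M (g a) (g b) = ∑ g : G ≃g G, ∑ b, M (g a) (g b) :=
          Finset.sum_comm
        simp only [autSum_apply, hswap]
        exact Finset.sum_comm
    _ = ∑ _g : G ≃g G, ∑ a, ∑ b, M a b := by
        refine Finset.sum_congr rfl fun g _ => ?_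
        have hrow : ∀ a, ∑ b, M (g a) (g b) = ∑ b, M (g a) b := fun a =>
          Fintype.sum_equiv g.toEquiv _ _ fun _ => rfl
        simp only [hrow]
        exact Fintype.sum_equiv g.toEquiv _ _ fun _ => rfl
    _ = Fintype.card (G ≃g G) * ∑ a, ∑ b, M a b := by simp

end Averaging

section Symmetrization

variable {V : Type*} [Fintype V] {G : SimpleGraph V}

lemma VertexTransitive.sum_eq_card_mul (hG : VertexTransitive G) {f : V → ℝ}
    (hf : ∀ (g : G ≃g G) a, f (g a) = f a) (a : V) : ∑ b, f b = Fintype.card V * f a := by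
  calc ∑ b, f b = ∑ _b : V, f a :=
        Finset.sum_congr rfl fun b _ => by obtain ⟨g, rfl⟩ := hG a b; exact hf g a
    _ = Fintype.card V * f a := by simp

lemma ThetaFeasible.exists_h2Feasible [Nonempty V] (hG : VertexTransitive G)
    {M' : Matrix V V ℝ} (hM' : ThetaFeasible G M') :
    ∃ M, H2Feasible G M ∧ ∀ a, ∑ b, M a b = ∑ a, ∑ b, M' a b := by
  obtain ⟨-, hpsd, htr, hedge⟩ := hM'
  have := Fintype.ofFinite (G ≃g G)
  set A := autSum G M'
  set k : ℝ := (Fintype.card (G ≃g G) : ℝ)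
  set n : ℝ := (Fintype.card V : ℝ)
  have hk : 0 < k := by positivity
  have hn : 0 < n := by positivity
  have hApsd : A.PosSemidef := posSemidef_sum _ fun g _ => hpsd.submatrix g
  have hdiag (a : V) : n * A a a = k := by
    rw [← hG.sum_eq_card_mul (f := fun c => A c c) (fun g c => autSum_apply_map M' g c c) a]
    exact (trace_autSum M').trans (by rw [htr, mul_one])
  have hrow (a : V) : n * ∑ b, A a b = k * ∑ a, ∑ b, M' a b := by
    rw [← sum_sum_autSum, ← hG.sum_eq_card_mul (f := fun c => ∑ b, A c b) _ a]
    intro g c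
    calc ∑ b, A (g c) b = ∑ b, A (g c) (g b) :=
          (Fintype.sum_equiv g.toEquiv _ _ fun _ => rfl).symm
      _ = ∑ b, A c b := Finset.sum_congr rfl fun b _ => autSum_apply_map M' g c b
  have hApsd' : ((n / k) • A).PosSemidef := hApsd.smul (by positivity)
  refine ⟨(n / k) • A, ⟨hApsd'.isSymm, hApsd', fun a => ?_, fun a b hab => ?_⟩, fun a => ?_⟩
  · rw [Matrix.smul_apply, smul_eq_mul, div_mul_eq_mul_div, hdiag, div_self hk.ne']
  · simp [A, autSum_apply, hedge _ _ (RelIso.map_rel_iff _ |>.2 hab)]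
  · simp only [Matrix.smul_apply, smul_eq_mul, ← Finset.mul_sum]
    rw [div_mul_eq_mul_div, hrow a, mul_div_cancel_left₀ _ hk.ne']

end Symmetrization

theorem stmt2 {V : Type*} [Fintype V] [DecidableEq V] [Nonempty V]
    (G : SimpleGraph V) (hG : VertexTransitive G) (J : V → ℝ) :
    sInf {x : ℝ | ∃ (v : V → ℝ) (M : Matrix V V ℝ),
        HFeasible G v M ∧ x = ∑ a, J a * v a}
      ≤ -((∑ a, |J a|) * (Real.sqrt (Fintype.card V))⁻¹ * Real.sqrt (lovaszTheta G)) := by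
  set S := {x : ℝ | ∃ (v : V → ℝ) (M : Matrix V V ℝ), HFeasible G v M ∧ x = ∑ a, J a * v a}
  have hS : BddBelow S := ⟨-∑ a, |J a|, by rintro _ ⟨v, M, hvM, rfl⟩; exact hvM.neg_sum_abs_le J⟩
  have hS0 : sInf S ≤ 0 := csInf_le hS ⟨0, 1, hFeasible_zero_one, by simp⟩
  have hθ : (∑ a, |J a|) * (√(Fintype.card V))⁻¹ * √(lovaszTheta G) ≤ -sInf S := by
    refine Real.mul_sqrt_sSup_le (by positivity) (by linarith) ?_
    rintro _ ⟨M', hM', rfl⟩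
    obtain ⟨M, hM, hrow⟩ := hM'.exists_h2Feasible hG
    obtain ⟨v, N, hvN, hval⟩ := hM.exists_hFeasible hrow J
    linarith [csInf_le hS ⟨v, N, hvN, hval.symm⟩]
  linarith
end

section
/- Let G be a finite simple graph on a nonempty vertex set V. Let d ≥ 1 and let (O_α)_{α∈V} be Hermitian d×d complex matrices with O_α² = I for all α, such that O_α O_β = −O_β O_α whenever αβ is an edge of G and O_α O_β = O_β O_α whenever α ≠ β are not adjacent in G. Then for every real vector J ∈ ℝ^V with Σ_α J_α² = 1, the operator norm satisfies ‖Σ_α J_α O_α‖² ≤ ϑ(G). -/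
open scoped BigOperators

/-- The operator norm of a complex matrix acting on ℂ^d with the standard Hermitian
inner product. -/
noncomputable def matOpNorm {m : Type*} [Fintype m] [DecidableEq m] (M : Matrix m m ℂ) : ℝ :=
  ‖Matrix.toEuclideanCLM (𝕜 := ℂ) M‖

/-! For a vector `ψ`, the real vectors `w α = J α • O α ψ` (with `⟪x, y⟫_ℝ = re ⟪x, y⟫_ℂ`) are
orthogonal along the edges of `G`, since anticommuting Hermitian `O α`, `O β` make
`⟪O α ψ, O β ψ⟫_ℂ` purely imaginary; and `‖w α‖ = |J α| ‖ψ‖` because `O α` is unitary. Their Gram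
matrix, divided by its trace `‖ψ‖²`, is therefore theta-feasible, and the sum of its entries is
`‖∑ α, w α‖² / ‖ψ‖² = ‖(∑ α, J α • O α) ψ‖² / ‖ψ‖²`. -/

open scoped InnerProductSpace

theorem ContinuousLinearMap.opNorm_sq_le_of_norm_apply_sq_le {𝕜 F : Type*} [RCLike 𝕜]
    [NormedAddCommGroup F] [NormedSpace 𝕜 F] (f : F →L[𝕜] F) {c : ℝ} (hc : 0 ≤ c)
    (h : ∀ x, ‖f x‖ ^ 2 ≤ c * ‖x‖ ^ 2) : ‖f‖ ^ 2 ≤ c := by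
  refine (Real.le_sqrt (norm_nonneg f) hc).mp (f.opNorm_le_bound (Real.sqrt_nonneg c) fun x => ?_)
  rw [← Real.sqrt_sq (norm_nonneg (f x)), ← Real.sqrt_sq (norm_nonneg x), ← Real.sqrt_mul hc]
  exact Real.sqrt_le_sqrt (h x)

section

variable {V : Type*} [Fintype V] {G : SimpleGraph V}

theorem Matrix.PosSemidef.two_mul_apply_le_of_isSymm {M : Matrix V V ℝ} (hM : M.PosSemidef)
    (hs : M.IsSymm) (a b : V) : 2 * M a b ≤ M a a + M b b := by
  classical
  have h := hM.dotProduct_mulVec_nonneg (Pi.single a 1 - Pi.single b 1)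
  have hba : M b a = M a b := hs.apply a b
  simp only [star_trivial, Matrix.mulVec_sub, sub_dotProduct, dotProduct_sub,
    single_one_dotProduct, Matrix.mulVec_single_one, Matrix.col_apply] at h
  linarith

theorem ThetaFeasible.sum_le_card {M : Matrix V V ℝ} (hM : ThetaFeasible G M) :
    ∑ a, ∑ b, M a b ≤ Fintype.card V := by
  obtain ⟨hs, hpsd, htr, -⟩ := hM
  have htr' : ∑ a, M a a = 1 := htr
  have h2 : 2 * ∑ a, ∑ b, M a b ≤ 2 * Fintype.card V := calc
    2 * ∑ a, ∑ b, M a b = ∑ a, ∑ b, 2 * M a b := by simp only [Finset.mul_sum]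
    _ ≤ ∑ a : V, ∑ b : V, (M a a + M b b) := by
      gcongr with a _ b _; exact hpsd.two_mul_apply_le_of_isSymm hs a b
    _ = 2 * Fintype.card V := by
      simp only [Finset.sum_add_distrib, Finset.sum_const, Finset.card_univ, nsmul_eq_mul,
        ← Finset.mul_sum, htr']
      ring
  linarith

theorem ThetaFeasible.sum_nonneg {M : Matrix V V ℝ} (hM : ThetaFeasible G M) :
    0 ≤ ∑ a, ∑ b, M a b := by
  simpa [dotProduct, Matrix.mulVec, Finset.mul_sum] using hM.2.1.dotProduct_mulVec_nonneg 1

theorem ThetaFeasible.sum_le_lovaszTheta {M : Matrix V V ℝ} (hM : ThetaFeasible G M) :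
    ∑ a, ∑ b, M a b ≤ lovaszTheta G :=
  le_csSup ⟨Fintype.card V, by rintro x ⟨M, hM, rfl⟩; exact hM.sum_le_card⟩ ⟨M, hM, rfl⟩

theorem lovaszTheta_nonneg (G : SimpleGraph V) : 0 ≤ lovaszTheta G :=
  Real.sSup_nonneg fun _ ⟨_, hM, hx⟩ => hx ▸ hM.sum_nonneg

section Gram

variable {F : Type*} [NormedAddCommGroup F] [InnerProductSpace ℝ F]

theorem Matrix.sum_sum_gram (w : V → F) : ∑ a, ∑ b, Matrix.gram ℝ w a b = ‖∑ a, w a‖ ^ 2 := by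
  simp only [Matrix.gram_apply, ← inner_sum, ← sum_inner, real_inner_self_eq_norm_sq]

theorem Matrix.trace_gram (w : V → F) : (Matrix.gram ℝ w).trace = ∑ a, ‖w a‖ ^ 2 := by
  simp [Matrix.trace]

theorem norm_sum_sq_le_lovaszTheta_mul (w : V → F) (horth : ∀ a b, G.Adj a b → ⟪w a, w b⟫_ℝ = 0) :
    ‖∑ a, w a‖ ^ 2 ≤ lovaszTheta G * ∑ a, ‖w a‖ ^ 2 := by
  set t := ∑ a, ‖w a‖ ^ 2
  rcases (Finset.sum_nonneg fun a _ => sq_nonneg ‖w a‖ : 0 ≤ t).eq_or_lt with ht | ht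
  · have hw : ∀ a, w a = 0 := fun a => by
      simpa using (Finset.sum_eq_zero_iff_of_nonneg fun a _ => sq_nonneg ‖w a‖).mp ht.symm a
        (Finset.mem_univ a)
    simp [hw, t]
  have hfeas : ThetaFeasible G (t⁻¹ • Matrix.gram ℝ w) := by
    refine ⟨?_, (Matrix.posSemidef_gram ℝ w).smul (inv_nonneg.mpr ht.le), ?_, ?_⟩
    · exact Matrix.IsSymm.smul (Matrix.isHermitian_gram ℝ w) _
    · rw [Matrix.trace_smul, Matrix.trace_gram, smul_eq_mul, inv_mul_cancel₀ ht.ne']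
    · intro a b hab
      simp [horth a b hab]
  have := hfeas.sum_le_lovaszTheta
  simp only [Matrix.smul_apply, smul_eq_mul, ← Finset.mul_sum, Matrix.sum_sum_gram] at this
  rwa [inv_mul_le_iff₀ ht, mul_comm] at this

end Gram

section Operators

variable {E : Type*} [NormedAddCommGroup E] [InnerProductSpace ℂ E] [CompleteSpace E]

theorem IsSelfAdjoint.mem_unitary_of_mul_self_eq_one {T : E →L[ℂ] E} (hT : IsSelfAdjoint T)
    (h : T * T = 1) : T ∈ unitary (E →L[ℂ] E) :=
  Unitary.mem_iff.mpr (by rw [hT.star_eq]; exact ⟨h, h⟩)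

theorem IsSelfAdjoint.re_inner_eq_zero_of_mul_eq_neg {S T : E →L[ℂ] E} (hS : IsSelfAdjoint S)
    (hT : IsSelfAdjoint T) (h : S * T = -(T * S)) (x : E) : RCLike.re ⟪S x, T x⟫_ℂ = 0 := by
  have key : ⟪S x, T x⟫_ℂ = -starRingEnd ℂ ⟪S x, T x⟫_ℂ := calc
    ⟪S x, T x⟫_ℂ = ⟪x, (S * T) x⟫_ℂ := hS.isSymmetric x (T x)
    _ = -⟪x, (T * S) x⟫_ℂ := by rw [h]; simp [inner_neg_right]
    _ = -⟪T x, S x⟫_ℂ := congrArg Neg.neg (hT.isSymmetric x (S x)).symm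
    _ = -starRingEnd ℂ ⟪S x, T x⟫_ℂ := by rw [inner_conj_symm]
  have := congrArg RCLike.re key
  simp only [map_neg, RCLike.conj_re] at this
  linarith

theorem norm_sum_smul_apply_sq_le_lovaszTheta_mul (O : V → E →L[ℂ] E)
    (hsa : ∀ a, IsSelfAdjoint (O a)) (hsq : ∀ a, O a * O a = 1)
    (hanti : ∀ a b, G.Adj a b → O a * O b = -(O b * O a)) (J : V → ℝ) (x : E) :
    ‖∑ a, (J a : ℂ) • O a x‖ ^ 2 ≤ lovaszTheta G * (∑ a, J a ^ 2) * ‖x‖ ^ 2 := by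
  let _ := InnerProductSpace.complexToReal (G := E)
  have horth : ∀ a b, G.Adj a b → ⟪J a • O a x, J b • O b x⟫_ℝ = 0 := fun a b hab => by
    rw [real_inner_smul_left, real_inner_smul_right, real_inner_eq_re_inner,
      (hsa a).re_inner_eq_zero_of_mul_eq_neg (hsa b) (hanti a b hab), mul_zero, mul_zero]
  have hnorm : ∀ a, ‖J a • O a x‖ ^ 2 = J a ^ 2 * ‖x‖ ^ 2 := fun a => by
    rw [norm_smul, ContinuousLinearMap.norm_map_of_mem_unitary
      ((hsa a).mem_unitary_of_mul_self_eq_one (hsq a)), Real.norm_eq_abs, mul_pow, sq_abs]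
  simpa only [Complex.coe_smul, hnorm, ← Finset.sum_mul, mul_assoc]
    using norm_sum_sq_le_lovaszTheta_mul (G := G) (fun a => J a • O a x) horth

theorem opNorm_sum_smul_sq_le_lovaszTheta_mul (O : V → E →L[ℂ] E)
    (hsa : ∀ a, IsSelfAdjoint (O a)) (hsq : ∀ a, O a * O a = 1)
    (hanti : ∀ a b, G.Adj a b → O a * O b = -(O b * O a)) (J : V → ℝ) :
    ‖∑ a, (J a : ℂ) • O a‖ ^ 2 ≤ lovaszTheta G * ∑ a, J a ^ 2 :=
  ContinuousLinearMap.opNorm_sq_le_of_norm_apply_sq_le _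
    (mul_nonneg (lovaszTheta_nonneg G) (Finset.sum_nonneg fun a _ => sq_nonneg (J a))) fun x => by
      simpa only [sum_apply, smul_apply]
        using norm_sum_smul_apply_sq_le_lovaszTheta_mul O hsa hsq hanti J x

end Operators

end

theorem stmt7_general {V : Type*} [Fintype V] (G : SimpleGraph V)
    (d : ℕ) (O : V → Matrix (Fin d) (Fin d) ℂ)
    (hHerm : ∀ a, (O a).IsHermitian)
    (hsq : ∀ a, O a * O a = 1)
    (hanti : ∀ a b, G.Adj a b → O a * O b = -(O b * O a))
    (J : V → ℝ) (hJ : ∑ a, J a ^ 2 = 1) :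
    matOpNorm (∑ a, (J a : ℂ) • O a) ^ 2 ≤ lovaszTheta G := by
  have h := opNorm_sum_smul_sq_le_lovaszTheta_mul (G := G)
    (fun a => Matrix.toEuclideanCLM (𝕜 := ℂ) (O a))
    (fun a => (hHerm a).isSelfAdjoint.map Matrix.toEuclideanCLM)
    (fun a => by simp only [← map_mul, hsq, map_one])
    (fun a b hab => by simp only [← map_mul, hanti a b hab, map_neg]) J
  rw [hJ, mul_one] at h
  simpa only [matOpNorm, map_sum, map_smul] using h

theorem stmt7 {V : Type*} [Fintype V] [Nonempty V] (G : SimpleGraph V)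
    (d : ℕ) (hd : 1 ≤ d) (O : V → Matrix (Fin d) (Fin d) ℂ)
    (hHerm : ∀ a, (O a).IsHermitian)
    (hsq : ∀ a, O a * O a = 1)
    (hanti : ∀ a b, G.Adj a b → O a * O b = -(O b * O a))
    (hcomm : ∀ a b, a ≠ b → ¬ G.Adj a b → O a * O b = O b * O a)
    (J : V → ℝ) (hJ : ∑ a, J a ^ 2 = 1) :
    matOpNorm (∑ a, (J a : ℂ) • O a) ^ 2 ≤ lovaszTheta G :=
  stmt7_general G d O hHerm hsq hanti J hJ
end
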